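/- arXiv:1810.00089 — 3 statements merged into one kernel-verified Lean document; each statement's English description precedes it below -/
import Mathlib

section
/- Let Q and R be real symmetric N×N matrices such that for every non-zero z ∈ ℝ^N, zᵀQz ≥ 0 implies zᵀRz ≠ 0. Then there exists a constant K > 0 such that for every non-zero z ∈ ℝ^N, zᵀQz − K·|zᵀRz| < 0. -/
open Matrix

/-- Bang-bang feedback with a uniform gain: if `Q`, `R` are symmetric and for every
nonzero `z`, `zᵀQz ≥ 0` implies `zᵀRz ≠ 0`, then there is a single gain `K > 0` with
`zᵀQz − K·|zᵀRz| < 0` for all nonzero `z`. -/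
theorem exists_uniform_gain (N : ℕ) (Q R : Matrix (Fin N) (Fin N) ℝ)
    (hQ : Q.IsSymm) (hR : R.IsSymm)
    (hcond : ∀ z : Fin N → ℝ, z ≠ 0 → 0 ≤ z ⬝ᵥ Q.mulVec z → z ⬝ᵥ R.mulVec z ≠ 0) :
    ∃ K : ℝ, 0 < K ∧ ∀ z : Fin N → ℝ, z ≠ 0 →
      z ⬝ᵥ Q.mulVec z - K * |z ⬝ᵥ R.mulVec z| < 0 := by
  set f : (Fin N → ℝ) → ℝ := fun z => z ⬝ᵥ Q.mulVec z with hf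
  set g : (Fin N → ℝ) → ℝ := fun z => |z ⬝ᵥ R.mulVec z| with hg
  have hfc : Continuous f := by
    simp only [hf, dotProduct, Matrix.mulVec]
    fun_prop
  have hgc : Continuous g := by
    simp only [hg, dotProduct, Matrix.mulVec]
    fun_prop
  have hg0 : ∀ z, 0 ≤ g z := fun z => abs_nonneg _
  have hfs : ∀ (c : ℝ) (z : Fin N → ℝ), f (c • z) = c ^ 2 * f z := by
    intro c z
    simp only [hf, Matrix.mulVec_smul, smul_dotProduct, dotProduct_smul, smul_eq_mul]
    ring
  have hgs : ∀ (c : ℝ) (z : Fin N → ℝ), g (c • z) = c ^ 2 * g z := by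
    intro c z
    simp only [hg, Matrix.mulVec_smul, smul_dotProduct, dotProduct_smul, smul_eq_mul,
      ← mul_assoc, ← sq, abs_mul, sq_abs, abs_of_nonneg (sq_nonneg c)]
  -- claim on sphere
  have key : ∃ K : ℝ, 0 < K ∧ ∀ w : Fin N → ℝ, ‖w‖ = 1 → f w - K * g w < 0 := by
    set S := Metric.sphere (0 : Fin N → ℝ) 1 with hS
    have hSc : IsCompact S := isCompact_sphere 0 1
    have hmemS : ∀ w : Fin N → ℝ, ‖w‖ = 1 → w ∈ S := by
      intro w hw; simp [hS, hw]
    set C := {w ∈ S | 0 ≤ f w} with hC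
    have hCc : IsCompact C := by
      apply hSc.inter_right
      exact isClosed_le continuous_const hfc
    by_cases hne : C.Nonempty
    · obtain ⟨w0, hw0C, hw0min⟩ := hCc.exists_isMinOn hne hgc.continuousOn
      have hSne : S.Nonempty := ⟨w0, hw0C.1⟩
      obtain ⟨w1, hw1S, hw1max⟩ := hSc.exists_isMaxOn hSne hfc.continuousOn
      set m := g w0 with hm
      set M := f w1 with hM
      have hw0ne : w0 ≠ 0 := by
        have := hw0C.1
        simp only [hS, Metric.mem_sphere, dist_zero_right] at this
        intro h; rw [h] at this; simp at this
      have hmpos : 0 < m := by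
        have hne' := hcond w0 hw0ne hw0C.2
        have : g w0 ≠ 0 := abs_ne_zero.mpr hne'
        exact lt_of_le_of_ne (hg0 w0) (Ne.symm this)
      have hM0 : 0 ≤ M := le_trans hw0C.2 (hw1max hw0C.1)
      refine ⟨(M + 1) / m, div_pos (by linarith) hmpos, ?_⟩
      intro w hw
      by_cases hfw : 0 ≤ f w
      · have hwC : w ∈ C := ⟨hmemS w hw, hfw⟩
        have h1 : m ≤ g w := hw0min hwC
        have h2 : f w ≤ M := hw1max (hmemS w hw)
        have h3 : (M + 1) / m * m ≤ (M + 1) / m * g w := by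
          apply mul_le_mul_of_nonneg_left h1
          positivity
        rw [div_mul_cancel₀ _ (ne_of_gt hmpos)] at h3
        linarith
      · push_neg at hfw
        have : 0 ≤ (M + 1) / m * g w := by positivity
        linarith
    · refine ⟨1, one_pos, ?_⟩
      intro w hw
      have hfw : f w < 0 := by
        by_contra h
        push_neg at h
        exact hne ⟨w, hmemS w hw, h⟩
      have := hg0 w
      linarith
  obtain ⟨K, hK, hKlt⟩ := key
  refine ⟨K, hK, ?_⟩
  intro z hz
  have hzn : (0:ℝ) < ‖z‖ := norm_pos_iff.mpr hz
  set w := ‖z‖⁻¹ • z with hw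
  have hwn : ‖w‖ = 1 := by
    rw [hw, norm_smul, norm_inv, norm_norm, inv_mul_cancel₀ (ne_of_gt hzn)]
  have hzw : z = ‖z‖ • w := by
    rw [hw, smul_smul, mul_inv_cancel₀ (ne_of_gt hzn), one_smul]
  have h := hKlt w hwn
  have e1 : f z = ‖z‖ ^ 2 * f w := by
    conv_lhs => rw [hzw]
    exact hfs _ _
  have e2 : g z = ‖z‖ ^ 2 * g w := by
    conv_lhs => rw [hzw]
    exact hgs _ _
  calc f z - K * g z = ‖z‖ ^ 2 * (f w - K * g w) := by rw [e1, e2]; ring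
    _ < 0 := mul_neg_of_pos_of_neg (by positivity) h
end

section
/- Let a, b ∈ ℝ and define k := −(a + √(a² + b⁴))/b if b ≠ 0 and k := 0 if b = 0 (Sontag's formula). If b = 0 implies a < 0, then a + b·k < 0. Moreover, when b ≠ 0 one has a + b·k = −√(a² + b⁴). -/
noncomputable def sontagFeedback (a b : ℝ) : ℝ :=
  if b ≠ 0 then -(a + Real.sqrt (a ^ 2 + b ^ 4)) / b else 0

theorem add_mul_sontagFeedback_of_ne_zero {a b : ℝ} (hb : b ≠ 0) :
    a + b * sontagFeedback a b = -Real.sqrt (a ^ 2 + b ^ 4) := by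
  rw [sontagFeedback, if_pos hb]
  field_simp
  ring

theorem add_mul_sontagFeedback_neg {a b : ℝ} (h : b = 0 → a < 0) :
    a + b * sontagFeedback a b < 0 := by
  by_cases hb : b = 0
  · simpa [sontagFeedback, hb] using h hb
  · rw [add_mul_sontagFeedback_of_ne_zero hb, neg_neg_iff_pos, Real.sqrt_pos]
    positivity

/-- Sontag's formula: with `k = −(a + √(a² + b⁴))/b` if `b ≠ 0` and `k = 0` otherwise,
the stabilizability condition `b = 0 → a < 0` implies `a + b·k < 0`; moreover when
`b ≠ 0` one has `a + b·k = −√(a² + b⁴)`. -/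
theorem sontag_formula (a b : ℝ) (k : ℝ)
    (hk : k = if b ≠ 0 then -(a + Real.sqrt (a ^ 2 + b ^ 4)) / b else 0)
    (h : b = 0 → a < 0) :
    a + b * k < 0 ∧ (b ≠ 0 → a + b * k = -Real.sqrt (a ^ 2 + b ^ 4)) := by
  change k = sontagFeedback a b at hk
  subst hk
  exact ⟨add_mul_sontagFeedback_neg h, add_mul_sontagFeedback_of_ne_zero⟩
end

section
/- Let a, b, q ∈ ℝ with q > 0, and define k := −(a + √(a² + q·b²))/b if b ≠ 0 and k := 0 if b = 0 (the modified Sontag formula). If b = 0 implies a < 0, then a + b·k < 0. Moreover, when b ≠ 0 one has a + b·k = −√(a² + q·b²). -/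
/-- Modified Sontag formula: with `q > 0` and `k = −(a + √(a² + q·b²))/b` if `b ≠ 0`,
`k = 0` otherwise, the condition `b = 0 → a < 0` implies `a + b·k < 0`; moreover when
`b ≠ 0` one has `a + b·k = −√(a² + q·b²)`. -/
theorem modified_sontag_formula (a b q : ℝ) (hq : 0 < q) (k : ℝ)
    (hk : k = if b ≠ 0 then -(a + Real.sqrt (a ^ 2 + q * b ^ 2)) / b else 0)
    (h : b = 0 → a < 0) :
    a + b * k < 0 ∧ (b ≠ 0 → a + b * k = -Real.sqrt (a ^ 2 + q * b ^ 2)) := by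
  by_cases hb : b = 0
  · simp [hk, hb, h hb]
  · have hclosed : a + b * k = -Real.sqrt (a ^ 2 + q * b ^ 2) := by
      rw [hk, if_pos hb, mul_div_cancel₀ _ hb]
      ring
    have hcost_pos : 0 < a ^ 2 + q * b ^ 2 := by positivity
    exact ⟨hclosed ▸ neg_neg_of_pos (Real.sqrt_pos.mpr hcost_pos), fun _ => hclosed⟩
end
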